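/- arXiv:1802.00993 — 8 statements merged into one kernel-verified Lean document; each statement's English description precedes it below -/
import Mathlib

section
/- For all real a, b, c > 0 with ac ≤ 2, the sequence s_n = (Γ(an+b)/Γ(b))^c satisfies Carleman's condition: the series ∑_{n≥1} s_n^{−1/(2n)} diverges. -/
/-!
Convexity of `Γ` between `1` and `⌊x⌋ + 1`, together with `k! ≤ kᵏ`, gives `Γ x ≤ xˣ` for
`x ≥ 1`, hence `log Γ(am + b) ≤ a m log m + O(m)`. Therefore
`s_m^{1/(2m)} = exp ((c / 2m) log (Γ(am + b) / Γ b)) = O(m^{ac/2}) = O(m)` since `ac ≤ 2`, and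
`∑ s_m^{-1/(2m)}` dominates a multiple of the harmonic series.
-/

open Real Filter Asymptotics

theorem Real.Gamma_le_rpow_self {x : ℝ} (hx : 1 ≤ x) : Gamma x ≤ x ^ x := by
  set k := ⌊x⌋₊
  have hkx : (k : ℝ) ≤ x := Nat.floor_le (by linarith)
  have hxk : x ≤ k + 1 := (Nat.lt_floor_add_one x).le
  have hconv : Gamma x ≤ max (Gamma 1) (Gamma (k + 1)) :=
    convexOn_Gamma.le_on_segment (Set.mem_Ioi.2 one_pos) (by positivity : (0 : ℝ) < k + 1)
      (by rw [segment_eq_Icc (by linarith)]; exact ⟨hx, hxk⟩)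
  rw [Gamma_one, Gamma_nat_eq_factorial] at hconv
  refine hconv.trans (max_le (one_le_rpow hx (by linarith)) ?_)
  calc (k.factorial : ℝ) ≤ (k : ℝ) ^ k := by exact_mod_cast Nat.factorial_le_pow k
    _ ≤ x ^ k := by gcongr
    _ = x ^ (k : ℝ) := (rpow_natCast x k).symm
    _ ≤ x ^ x := rpow_le_rpow_of_exponent_le hx hkx

theorem log_Gamma_mul_add_le {a b m : ℝ} (hb : 0 ≤ b) (hm : 1 ≤ m) (hx : 1 ≤ a * m + b) :
    log (Gamma (a * m + b)) ≤ m * (a * log m + (a + b) * |log (a + b)| + b) := by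
  set x := a * m + b
  have hx_le : x ≤ (a + b) * m := by nlinarith
  have hab : 0 < a + b := by nlinarith
  have hlog_x : log x ≤ log (a + b) + log m := by
    rw [← log_mul hab.ne' (by positivity)]
    exact log_le_log (by linarith) hx_le
  have hlog_m : log m ≤ m := (log_le_sub_one_of_pos (by linarith)).trans (by linarith)
  have hL : x * log (a + b) ≤ (a + b) * m * |log (a + b)| :=
    (mul_le_mul_of_nonneg_left (le_abs_self _) (by linarith)).trans
      (mul_le_mul_of_nonneg_right hx_le (abs_nonneg _))
  calc log (Gamma x) ≤ log (x ^ x) :=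
        log_le_log (Gamma_pos_of_pos (by linarith)) (Gamma_le_rpow_self hx)
    _ = x * log x := log_rpow (by linarith) x
    _ ≤ x * (log (a + b) + log m) := mul_le_mul_of_nonneg_left hlog_x (by linarith)
    _ ≤ m * (a * log m + (a + b) * |log (a + b)| + b) := by nlinarith

theorem Gamma_div_Gamma_rpow_le {a b c m : ℝ} (hb : 0 < b) (hc : 0 ≤ c) (hac : a * c ≤ 2)
    (hm : 1 ≤ m) (hx : 1 ≤ a * m + b) :
    ((Gamma (a * m + b) / Gamma b) ^ c) ^ (1 / (2 * m)) ≤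
      exp (c / 2 * ((a + b) * |log (a + b)| + b + |log (Gamma b)|)) * m := by
  have hGx := Gamma_pos_of_pos (by linarith : 0 < a * m + b)
  have hGb := Gamma_pos_of_pos hb
  have hlog := log_Gamma_mul_add_le hb.le hm hx
  have hlog_m : 0 ≤ log m := log_nonneg hm
  have hG := div_pos hGx hGb
  rw [← rpow_mul hG.le, rpow_def_of_pos hG, log_div hGx.ne' hGb.ne',
    ← exp_log (by linarith : 0 < m), ← exp_add, exp_log (by linarith)]
  gcongr
  have hcm : 0 ≤ c / (2 * m) := by positivity
  have hGx_le : c / (2 * m) * log (Gamma (a * m + b)) ≤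
      a * c / 2 * log m + c / 2 * ((a + b) * |log (a + b)| + b) :=
    calc c / (2 * m) * log (Gamma (a * m + b))
        ≤ c / (2 * m) * (m * (a * log m + (a + b) * |log (a + b)| + b)) := by gcongr
      _ = a * c / 2 * log m + c / 2 * ((a + b) * |log (a + b)| + b) := by
        field_simp
        ring
  have hGb_le : -(c / (2 * m) * log (Gamma b)) ≤ c / 2 * |log (Gamma b)| :=
    calc -(c / (2 * m) * log (Gamma b)) ≤ c / (2 * m) * |log (Gamma b)| := by
          rw [← mul_neg]; exact mul_le_mul_of_nonneg_left (neg_le_abs _) hcm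
      _ ≤ c / 2 * |log (Gamma b)| := by gcongr; linarith
  have hac_log : a * c / 2 * log m ≤ log m := by nlinarith
  linarith [show (log (Gamma (a * m + b)) - log (Gamma b)) * (c * (1 / (2 * m))) =
    c / (2 * m) * log (Gamma (a * m + b)) - c / (2 * m) * log (Gamma b) by ring]

theorem not_summable_rpow_neg_of_rpow_le_mul {s : ℕ → ℝ} {K : ℝ} (hs : ∀ n, 0 < s n)
    (hK : ∀ᶠ n : ℕ in atTop, s n ^ (1 / (2 * ((n : ℝ) + 1))) ≤ K * (n + 1)) :
    ¬ Summable fun n : ℕ => s n ^ (-(1 / (2 * ((n : ℝ) + 1)))) := by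
  intro hsum
  refine Real.not_summable_one_div_natCast ((summable_nat_add_iff 1).mp ?_)
  refine summable_of_isBigO_nat hsum (IsBigO.of_bound K ?_)
  filter_upwards [hK] with n hn
  have hpos : 0 < s n ^ (1 / (2 * ((n : ℝ) + 1))) := rpow_pos_of_pos (hs n) _
  rw [rpow_neg (hs n).le, norm_inv, norm_of_nonneg hpos.le, norm_of_nonneg (by positivity),
    ← div_eq_mul_inv, le_div_iff₀ hpos, Nat.cast_add_one, one_div_mul_eq_div,
    div_le_iff₀ (by positivity)]
  exact hn

theorem stmt_4 (a b c : ℝ) (ha : 0 < a) (hb : 0 < b) (hc : 0 < c) (hac : a * c ≤ 2) :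
    ¬ Summable (fun n : ℕ =>
      ((Real.Gamma (a * (n + 1) + b) / Real.Gamma b) ^ c) ^ (-(1 / (2 * ((n:ℝ) + 1))))) := by
  have hx : ∀ᶠ n : ℕ in atTop, 1 ≤ a * ((n : ℝ) + 1) + b :=
    ((tendsto_natCast_atTop_atTop.atTop_add tendsto_const_nhds).const_mul_atTop ha
      |>.atTop_add tendsto_const_nhds).eventually_ge_atTop 1
  have hs (n : ℕ) : 0 < (Gamma (a * (n + 1) + b) / Gamma b) ^ c :=
    rpow_pos_of_pos (div_pos (Gamma_pos_of_pos (by positivity)) (Gamma_pos_of_pos hb)) c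
  apply not_summable_rpow_neg_of_rpow_le_mul hs
  filter_upwards [hx] with n hn
  exact Gamma_div_Gamma_rpow_le hb hc.le hac (by linarith [n.cast_nonneg (α := ℝ)]) hn
end

section
/- For all real a, b, c > 0 with ac > 2, the series ∑_{n≥1} (Γ(an+b)/Γ(b))^{−c/(2n)} converges. -/
/-!
Along `x = a n + b`, Stirling's lower bound `log Γ(x) ≳ x log x` gives
`log (Γ(a n + b) / Γ(b)) ≥ r n log n` eventually, for every `r < a`. Taking `r = 2q/c` with
`1 < q < a c / 2`, the `n`-th term is at most `n^(-q)`, a summable `p`-series.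
-/

open Real Filter Topology
open scoped Nat

lemma tendsto_mul_log_affine_div_mul_log {a : ℝ} (ha : 0 < a) (b : ℝ) :
    Tendsto (fun x => (a * x + b) * log (a * x + b) / (x * log x)) atTop (𝓝 a) := by
  have hslope : Tendsto (fun x : ℝ => a + b / x) atTop (𝓝 a) := by
    simpa using tendsto_const_nhds.add (tendsto_const_nhds.div_atTop (tendsto_id (α := ℝ)))
  have hlim : Tendsto (fun x => (a + b / x) * (1 + log (a + b / x) / log x)) atTop
      (𝓝 (a * (1 + 0))) :=
    hslope.mul (tendsto_const_nhds.add ((hslope.log ha.ne').div_atTop tendsto_log_atTop))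
  rw [add_zero, mul_one] at hlim
  refine hlim.congr' ?_
  filter_upwards [hslope.eventually (lt_mem_nhds ha), eventually_gt_atTop 1] with x hx hx1
  have hx0 : 0 < x := by linarith
  have hlogx : 0 < log x := log_pos hx1
  have hx_affine : a * x + b = x * (a + b / x) := by field_simp
  rw [hx_affine, log_mul hx0.ne' (by linarith)]
  field_simp

namespace Real

lemma sub_two_mul_log_sub_two_sub_le_log_Gamma {x : ℝ} (hx : 3 ≤ x) :
    (x - 2) * log (x - 2) - x ≤ log (Gamma x) := by
  obtain ⟨k, hk⟩ : ∃ k : ℕ, ⌊x⌋₊ = k + 1 :=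
    Nat.exists_eq_add_one.mpr (Nat.floor_pos.mpr (by linarith))
  have hkx : (k : ℝ) + 1 ≤ x := by exact_mod_cast hk ▸ Nat.floor_le (by linarith)
  have hxk : x < k + 2 := by
    have := Nat.lt_floor_add_one x
    rw [hk] at this
    push_cast at this
    linarith
  have hk_pos : (0 : ℝ) < k := by linarith
  have hΓ : (k ! : ℝ) ≤ Gamma x := by
    rw [← Gamma_nat_eq_factorial]
    exact Gamma_strictMonoOn_Ici.monotoneOn (Set.mem_Ici.mpr (by linarith))
      (Set.mem_Ici.mpr (by linarith)) hkx
  have hlog : log (x - 2) ≤ log k := log_le_log (by linarith) (by linarith)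
  calc (x - 2) * log (x - 2) - x ≤ k * log k - k := by
        nlinarith [log_nonneg (show (1 : ℝ) ≤ x - 2 by linarith)]
    _ ≤ log k ! := by
        have hk1 : (1 : ℝ) ≤ k := by linarith
        have hπ : 0 < log (2 * π) := log_pos (by linarith [pi_gt_three])
        linarith [Stirling.le_log_factorial_stirling (n := k) (by exact_mod_cast hk_pos.ne'),
          log_nonneg hk1]
    _ ≤ log (Gamma x) := log_le_log (by positivity) hΓ

lemma eventually_mul_mul_log_add_le_log_Gamma_affine {a : ℝ} (ha : 0 < a) (b C : ℝ) {r : ℝ}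
    (hr : r < a) : ∀ᶠ x in atTop, r * (x * log x) + C ≤ log (Gamma (a * x + b)) := by
  have hlim : Tendsto (fun x => (a * x + (b - 2)) * log (a * x + (b - 2)) / (x * log x)
      - (a + (b + C) / x) / log x) atTop (𝓝 (a - 0)) :=
    (tendsto_mul_log_affine_div_mul_log ha (b - 2)).sub
      ((tendsto_const_nhds.add (tendsto_const_nhds.div_atTop tendsto_id)).div_atTop
        tendsto_log_atTop)
  have harg : Tendsto (fun x => a * x + b) atTop atTop :=
    tendsto_atTop_add_const_right _ b (tendsto_id.const_mul_atTop ha)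
  filter_upwards [hlim.eventually (lt_mem_nhds (by simpa using hr)),
    harg.eventually_ge_atTop 3, eventually_gt_atTop 1] with x hrx h3 hx1
  have hx0 : 0 < x := by linarith
  have hlogx : 0 < log x := log_pos hx1
  have hΓ := sub_two_mul_log_sub_two_sub_le_log_Gamma h3
  rw [lt_sub_iff_add_lt, lt_div_iff₀ (by positivity)] at hrx
  have : (a + (b + C) / x) / log x * (x * log x) = a * x + b + C := by field_simp; ring
  rw [add_mul, this] at hrx
  ring_nf at hrx hΓ ⊢
  linarith

lemma eventually_Gamma_affine_div_rpow_le {a b c q : ℝ} (ha : 0 < a) (hb : 0 < b) (hc : 0 < c)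
    (hq : 2 * q < a * c) :
    ∀ᶠ x : ℝ in atTop, (Gamma (a * x + b) / Gamma b) ^ (-(c / (2 * x))) ≤ x ^ (-q) := by
  have hr : 2 * q / c < a := (div_lt_iff₀ hc).mpr hq
  filter_upwards [eventually_mul_mul_log_add_le_log_Gamma_affine ha b (log (Gamma b)) hr,
    eventually_gt_atTop 0] with x hlow hx0
  have hΓ : 0 < Gamma (a * x + b) := Gamma_pos_of_pos (by positivity)
  rw [rpow_def_of_pos (div_pos hΓ (Gamma_pos_of_pos hb)), rpow_def_of_pos hx0, exp_le_exp,
    log_div hΓ.ne' (Gamma_pos_of_pos hb).ne']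
  have key : q * log x * (2 * x / c) ≤ log (Gamma (a * x + b)) - log (Gamma b) := by
    have : q * log x * (2 * x / c) = 2 * q / c * (x * log x) := by ring
    linarith
  calc (log (Gamma (a * x + b)) - log (Gamma b)) * -(c / (2 * x))
      = -((log (Gamma (a * x + b)) - log (Gamma b)) * (c / (2 * x))) := by ring
    _ ≤ -(q * log x * (2 * x / c) * (c / (2 * x))) := by gcongr
    _ = log x * -q := by field_simp

end Real

theorem stmt_6 (a b c : ℝ) (ha : 0 < a) (hb : 0 < b) (hc : 0 < c) (hac : 2 < a * c) :
    Summable (fun n : ℕ =>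
      (Real.Gamma (a * (n + 1) + b) / Real.Gamma b) ^ (-(c / (2 * ((n:ℝ) + 1))))) := by
  obtain ⟨q, hq, hqac⟩ : ∃ q, 1 < q ∧ 2 * q < a * c := ⟨(a * c + 2) / 4, by linarith, by linarith⟩
  have hpseries : Summable (fun n : ℕ => ((n : ℝ) + 1) ^ (-q)) := by
    simpa using (summable_nat_add_iff 1).mpr (summable_nat_rpow.mpr (by linarith))
  refine hpseries.of_norm_bounded_eventually_nat ?_
  have hshift : Tendsto (fun n : ℕ => (n : ℝ) + 1) atTop atTop :=
    tendsto_atTop_add_const_right _ 1 tendsto_natCast_atTop_atTop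
  filter_upwards [hshift.eventually (eventually_Gamma_affine_div_rpow_le ha hb hc hqac)]
    with n hn
  rw [norm_of_nonneg (by positivity)]
  exact hn
end

section
/- For every complex z with Re z > 0, the Binet remainder μ(z) := log Γ(z) − (z − 1/2) Log z + z − (1/2) log(2π) satisfies |μ(z)| ≤ μ(Re z) ≤ 1/(12 Re z). -/
/-!
Both bounds come from the elementary inequalities `0 ≤ g t ≤ t / 12` for the Binet kernel
`g t = 1/2 - 1/t + 1/(eᵗ - 1)` on `t > 0`. Since `g ≥ 0`, the modulus of the integrand of `μ(z)`
is the integrand of `μ(Re z)`, which gives `|μ(z)| ≤ μ(Re z)`; and `g t / t ≤ 1/12` bounds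
`μ(x)` by `(1/12) ∫₀^∞ e^{-xt} dt = 1/(12x)`.
-/

open MeasureTheory Set

/-- The Binet remainder, via its integral representation (complex argument). -/
noncomputable def binetMu (z : ℂ) : ℂ :=
  ∫ t in Ioi (0:ℝ), ((1/2 - 1/t + 1/(Real.exp t - 1) : ℝ) : ℂ) * Complex.exp (-z * t) / (t:ℂ)

/-- The Binet remainder for a real argument. -/
noncomputable def binetMuReal (x : ℝ) : ℝ :=
  ∫ t in Ioi (0:ℝ), (1/2 - 1/t + 1/(Real.exp t - 1)) * Real.exp (-x * t) / t

open Real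

lemma nonneg_of_hasDerivAt_of_nonneg {f f' : ℝ → ℝ} (hf : ∀ x, HasDerivAt f (f' x) x)
    (h₀ : f 0 = 0) (hf' : ∀ x, 0 ≤ x → 0 ≤ f' x) {x : ℝ} (hx : 0 ≤ x) : 0 ≤ f x := by
  have hmono : MonotoneOn f (Ici 0) :=
    monotoneOn_of_hasDerivWithinAt_nonneg (convex_Ici 0)
      (fun t _ => (hf t).continuousAt.continuousWithinAt)
      (fun t _ => (hf t).hasDerivWithinAt)
      (fun t ht => hf' t (interior_subset ht))
  simpa [h₀] using hmono self_mem_Ici hx hx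

lemma exp_sub_one_mul_sub_two_add_two_mul_nonneg {t : ℝ} (ht : 0 ≤ t) :
    0 ≤ (exp t - 1) * (t - 2) + 2 * t := by
  -- the second derivative is `t eᵗ`
  have h₁ : ∀ x, 0 ≤ x → 0 ≤ exp x * (x - 1) + 1 := by
    refine fun x => nonneg_of_hasDerivAt_of_nonneg (f := fun x => exp x * (x - 1) + 1)
      (f' := fun x => x * exp x) (fun y => ?_) (by norm_num) (fun y hy => by positivity)
    exact (((hasDerivAt_exp y).mul ((hasDerivAt_id' y).sub_const 1)).add_const 1).congr_deriv
      (by ring)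
  refine nonneg_of_hasDerivAt_of_nonneg (f := fun x => (exp x - 1) * (x - 2) + 2 * x)
    (f' := fun x => exp x * (x - 1) + 1) (fun y => ?_) (by norm_num) h₁ ht
  exact ((((hasDerivAt_exp y).sub_const 1).mul ((hasDerivAt_id' y).sub_const 2)).add
    ((hasDerivAt_id' y).const_mul 2)).congr_deriv (by ring)

lemma exp_sub_one_mul_quadratic_sub_nonneg {t : ℝ} (ht : 0 ≤ t) :
    0 ≤ (exp t - 1) * (t ^ 2 / 12 - t / 2 + 1) - t := by
  -- the third derivative is `eᵗ t² / 12`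
  have hq : ∀ a b y : ℝ, HasDerivAt (fun t => t ^ 2 / 12 - t / a + b) (y / 6 - 1 / a) y := by
    intro a b y
    exact ((((hasDerivAt_pow 2 y).div_const 12).sub ((hasDerivAt_id' y).div_const a)).add_const
      b).congr_deriv (by ring)
  have h₂ : ∀ x, 0 ≤ x → 0 ≤ exp x * (x ^ 2 / 12 - x / 6 + 1 / 6) - 1 / 6 := by
    refine fun x => nonneg_of_hasDerivAt_of_nonneg
      (f := fun x => exp x * (x ^ 2 / 12 - x / 6 + 1 / 6) - 1 / 6)
      (f' := fun x => exp x * (x ^ 2 / 12)) (fun y => ?_) (by norm_num) (fun y _ => by positivity)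
    exact (((hasDerivAt_exp y).mul (hq 6 (1 / 6) y)).sub_const (1 / 6)).congr_deriv (by ring)
  have h₁ : ∀ x, 0 ≤ x → 0 ≤ exp x * (x ^ 2 / 12 - x / 3 + 1 / 2) - x / 6 - 1 / 2 := by
    refine fun x => nonneg_of_hasDerivAt_of_nonneg
      (f := fun x => exp x * (x ^ 2 / 12 - x / 3 + 1 / 2) - x / 6 - 1 / 2)
      (f' := fun x => exp x * (x ^ 2 / 12 - x / 6 + 1 / 6) - 1 / 6) (fun y => ?_) (by norm_num) h₂
    exact ((((hasDerivAt_exp y).mul (hq 3 (1 / 2) y)).sub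
      ((hasDerivAt_id' y).div_const 6)).sub_const (1 / 2)).congr_deriv (by ring)
  refine nonneg_of_hasDerivAt_of_nonneg (f := fun x => (exp x - 1) * (x ^ 2 / 12 - x / 2 + 1) - x)
    (f' := fun x => exp x * (x ^ 2 / 12 - x / 3 + 1 / 2) - x / 6 - 1 / 2) (fun y => ?_)
    (by norm_num) h₁ ht
  exact ((((hasDerivAt_exp y).sub_const 1).mul (hq 2 1 y)).sub (hasDerivAt_id' y)).congr_deriv
    (by ring)

noncomputable def binetKernel (t : ℝ) : ℝ := 1 / 2 - 1 / t + 1 / (exp t - 1)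

lemma binetKernel_nonneg {t : ℝ} (ht : 0 < t) : 0 ≤ binetKernel t := by
  have he : 0 < exp t - 1 := sub_pos.mpr (one_lt_exp_iff.mpr ht)
  have hF := exp_sub_one_mul_sub_two_add_two_mul_nonneg ht.le
  have key : binetKernel t = ((exp t - 1) * (t - 2) + 2 * t) / (2 * t * (exp t - 1)) := by
    rw [binetKernel]; field_simp
  rw [key]
  positivity

lemma binetKernel_le {t : ℝ} (ht : 0 < t) : binetKernel t ≤ t / 12 := by
  have he : 0 < exp t - 1 := sub_pos.mpr (one_lt_exp_iff.mpr ht)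
  have hh := exp_sub_one_mul_quadratic_sub_nonneg ht.le
  have key : t / 12 - binetKernel t
      = ((exp t - 1) * (t ^ 2 / 12 - t / 2 + 1) - t) / (t * (exp t - 1)) := by
    rw [binetKernel]; field_simp; ring
  exact sub_nonneg.mp (key ▸ by positivity)

lemma binetMuReal_eq (x : ℝ) :
    binetMuReal x = ∫ t in Ioi 0, binetKernel t * exp (-x * t) / t := rfl

lemma norm_binetMu_le (z : ℂ) : ‖binetMu z‖ ≤ binetMuReal z.re := by
  refine (norm_integral_le_integral_norm _).trans_eq (setIntegral_congr_fun measurableSet_Ioi ?_)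
  intro t (ht : 0 < t)
  have hg : 0 ≤ 1 / 2 - 1 / t + 1 / (exp t - 1) := binetKernel_nonneg ht
  dsimp only
  rw [norm_div, norm_mul, Complex.norm_real, Complex.norm_exp, Complex.norm_real, norm_eq_abs,
    norm_eq_abs, abs_of_nonneg hg, abs_of_pos ht]
  simp

lemma binetMuReal_le {x : ℝ} (hx : 0 < x) : binetMuReal x ≤ 1 / (12 * x) := by
  have hbound : ∀ t ∈ Ioi (0 : ℝ), binetKernel t * exp (-x * t) / t ≤ exp (-x * t) / 12 := by
    intro t (ht : 0 < t)
    rw [div_le_iff₀ ht]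
    nlinarith [binetKernel_le ht, exp_pos (-x * t)]
  have hnonneg : ∀ t ∈ Ioi (0 : ℝ), 0 ≤ binetKernel t * exp (-x * t) / t :=
    fun t (ht : 0 < t) => div_nonneg (mul_nonneg (binetKernel_nonneg ht) (exp_pos _).le) ht.le
  rw [binetMuReal_eq]
  calc ∫ t in Ioi 0, binetKernel t * exp (-x * t) / t ≤ ∫ t in Ioi 0, exp (-x * t) / 12 :=
        integral_mono_of_nonneg (ae_restrict_of_forall_mem measurableSet_Ioi hnonneg)
          ((integrableOn_exp_mul_Ioi (neg_lt_zero.mpr hx) 0).div_const 12)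
          (ae_restrict_of_forall_mem measurableSet_Ioi hbound)
    _ = 1 / (12 * x) := by
        rw [integral_div, integral_exp_mul_Ioi (neg_lt_zero.mpr hx)]
        field_simp
        simp

theorem stmt_10 (z : ℂ) (hz : 0 < z.re) :
    ‖binetMu z‖ ≤ binetMuReal z.re ∧ binetMuReal z.re ≤ 1 / (12 * z.re) :=
  ⟨norm_binetMu_le z, binetMuReal_le hz⟩
end

section
/- The function k(t) := 1/2 − 1/t + 1/(e^t − 1) is nonnegative for all t > 0. -/
/-!
Over the common denominator `2 t (eᵗ - 1) > 0` the numerator is `(t - 2) eᵗ + t + 2`.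
It vanishes at `0` and its derivative `(t - 1) eᵗ + 1` is nonnegative, which is the
inequality `1 - t ≤ e⁻ᵗ` multiplied by `eᵗ`.
-/

open Real

lemma sub_one_mul_exp_add_one_nonneg (x : ℝ) : 0 ≤ (x - 1) * exp x + 1 := by
  have h := mul_le_mul_of_nonneg_right (one_sub_le_exp_neg x) (exp_pos x).le
  rw [← exp_add, neg_add_cancel, exp_zero] at h
  linarith

lemma sub_two_mul_exp_add_add_two_nonneg {t : ℝ} (ht : 0 ≤ t) :
    0 ≤ (t - 2) * exp t + t + 2 := by
  have hderiv (x : ℝ) :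
      HasDerivAt (fun x ↦ (x - 2) * exp x + x + 2) ((x - 1) * exp x + 1) x := by
    refine ((((hasDerivAt_id' x).sub_const 2).mul (hasDerivAt_exp x)).add
      (hasDerivAt_id' x)).add_const 2 |>.congr_deriv ?_
    ring
  have hmono := monotone_of_hasDerivAt_nonneg hderiv sub_one_mul_exp_add_one_nonneg ht
  simpa using hmono

theorem stmt_11 (t : ℝ) (ht : 0 < t) :
    0 ≤ 1/2 - 1/t + 1/(Real.exp t - 1) := by
  have hexp : 0 < exp t - 1 := by linarith [add_one_lt_exp ht.ne']
  have hk : 1/2 - 1/t + 1/(exp t - 1)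
      = ((t - 2) * exp t + t + 2) / (2 * t * (exp t - 1)) := by
    field_simp
    ring
  rw [hk]
  exact div_nonneg (sub_two_mul_exp_add_add_two_nonneg ht.le) (by positivity)
end

section
/- For all real a, b > 0 and all y ∈ ℝ, ∫_{−∞}^∞ e^{−ixy} g₁(a,b)(x) dx = Γ(b+iay)/Γ(b), where g₁(a,b)(x) = (1/(aΓ(b))) exp(−bx/a − e^{−x/a}). -/
open MeasureTheory

/-! The substitution `t = e^{-x/a}` turns Euler's integral `Γ(s) = ∫₀^∞ t^{s-1} e^{-t} dt`
into `a Γ(s) = ∫_ℝ e^{-s x / a - e^{-x/a}} dx` for `Re s > 0`; with `s = b + i a y` the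
integrand is `a Γ(b)` times the integrand of the characteristic function. -/

theorem mellin_eq_integral_cexp_mul_smul {E : Type*} [NormedAddCommGroup E]
    [NormedSpace ℂ E] (f : ℝ → E) (s : ℂ) :
    mellin f s = ∫ x : ℝ, Complex.exp (s * x) • f (Real.exp x) := by
  rw [mellin, ← Real.range_exp, ← Set.image_univ,
    integral_image_eq_integral_abs_deriv_smul MeasurableSet.univ
      (fun x _ ↦ (Real.hasDerivAt_exp x).hasDerivWithinAt) Real.exp_injective.injOn,
    Measure.restrict_univ]
  congr 1 with x
  have hcpow : ((Real.exp x : ℝ) : ℂ) ^ (s - 1) = Complex.exp ((s - 1) * x) := by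
    rw [Complex.ofReal_exp, Complex.cpow_def_of_ne_zero (Complex.exp_ne_zero _),
      ← Complex.ofReal_exp, ← Complex.ofReal_log (Real.exp_pos x).le, Real.log_exp, mul_comm]
  rw [abs_of_pos (Real.exp_pos x), hcpow, ← Complex.coe_smul, smul_smul, Complex.ofReal_exp,
    ← Complex.exp_add]
  ring_nf

theorem Complex.Gamma_eq_integral_cexp_mul_sub_exp {s : ℂ} (hs : 0 < s.re) :
    Gamma s = ∫ x : ℝ, Complex.exp (s * x - Real.exp x) := by
  rw [Gamma_eq_integral hs, GammaIntegral_eq_mellin, mellin_eq_integral_cexp_mul_smul]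
  simp only [smul_eq_mul, ← Complex.exp_add, ofReal_neg, ofReal_exp, sub_eq_add_neg]

theorem Complex.integral_cexp_neg_mul_div_sub_exp_neg_div {s : ℂ} (hs : 0 < s.re) {a : ℝ}
    (ha : 0 < a) :
    ∫ x : ℝ, Complex.exp (-(s * x / a) - Real.exp (-(x / a))) = a * Gamma s := by
  have h := Measure.integral_comp_div (fun u : ℝ ↦ Complex.exp (s * u - Real.exp u)) (-a)
  rw [← Gamma_eq_integral_cexp_mul_sub_exp hs, abs_neg, abs_of_pos ha, real_smul] at h
  rw [← h]
  congr 1 with x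
  push_cast
  ring_nf

theorem stmt_13 (a b : ℝ) (ha : 0 < a) (hb : 0 < b) (y : ℝ) :
    ∫ x : ℝ, Complex.exp (-(Complex.I * x * y)) *
        (((1 / (a * Real.Gamma b)) * Real.exp (-(b * x / a) - Real.exp (-(x/a))) : ℝ) : ℂ)
      = Complex.Gamma ((b:ℂ) + Complex.I * a * y) / (Real.Gamma b : ℂ) := by
  set s : ℂ := b + Complex.I * a * y with hs_def
  have hs : 0 < s.re := by simpa [s] using hb
  have hGb : (Real.Gamma b : ℂ) ≠ 0 := Complex.ofReal_ne_zero.2 (Real.Gamma_pos_of_pos hb).ne'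
  have ha' : (a : ℂ) ≠ 0 := Complex.ofReal_ne_zero.2 ha.ne'
  have hintegrand : ∀ x : ℝ, Complex.exp (-(Complex.I * x * y)) *
      (((1 / (a * Real.Gamma b)) * Real.exp (-(b * x / a) - Real.exp (-(x/a))) : ℝ) : ℂ) =
      (a * Real.Gamma b : ℂ)⁻¹ * Complex.exp (-(s * x / a) - Real.exp (-(x / a))) := by
    intro x
    push_cast
    rw [one_div, mul_left_comm, ← Complex.exp_add, hs_def]
    congr 2
    field_simp
    ring
  simp_rw [hintegrand, integral_const_mul,
    Complex.integral_cexp_neg_mul_div_sub_exp_neg_div hs ha]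
  field_simp
end

section
/- For all real a, b > 0, the even moments s_{2n} = ∫_{−∞}^∞ x^{2n} g₁(a,b)(x) dx of the density g₁(a,b)(x) = (1/(aΓ(b))) exp(−bx/a − e^{−x/a}) satisfy s_{2n} < (a^{2n}/Γ(b)) ( (2n)!/b^{2n+1} + Γ(2n+b) ) for all n ≥ 1. -/
open MeasureTheory Set Real
open scoped Nat

/-!
Split the moment integral at `0`. For `x ≤ 0`, the bound `-x ≤ a e^{-x/a}` (from `t + 1 ≤ e^t`)
gives `x^{2n} ≤ a^{2n} e^{-2nx/a}`, which turns the integrand into `a^{2n}` times the same kernel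
with shape `2n + b`; over all of `ℝ` the substitution `t = e^{-x/a}` evaluates that kernel to
`a Γ(2n + b)`. For `x > 0`, dropping the factor `e^{-e^{-x/a}} < 1` leaves `x^{2n} e^{-bx/a}`,
whose integral over `(0, ∞)` is `(2n)! (a/b)^{2n+1}`; this is where the inequality becomes strict.
-/

theorem setIntegral_lt_setIntegral_of_forall_lt {α : Type*} [MeasurableSpace α] {μ : Measure α}
    {s : Set α} {f g : α → ℝ} (hs : MeasurableSet s) (hμs : μ s ≠ 0)
    (hf : IntegrableOn f s μ) (hg : IntegrableOn g s μ) (hfg : ∀ x ∈ s, f x < g x) :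
    ∫ x in s, f x ∂μ < ∫ x in s, g x ∂μ := by
  have hpos : ∀ x ∈ s, 0 < g x - f x := fun x hx => sub_pos.2 (hfg x hx)
  have hsupp : s ⊆ Function.support fun x => g x - f x := fun x hx => (hpos x hx).ne'
  rw [← sub_pos, ← integral_sub hg hf, setIntegral_pos_iff_support_of_nonneg_ae
    ((ae_restrict_iff' hs).2 (.of_forall fun x hx => (hpos x hx).le)) (hg.sub hf),
    inter_eq_right.2 hsupp, pos_iff_ne_zero]
  exact hμs

theorem exp_smul_gammaIntegrand_exp (c x : ℝ) :
    |exp x| • (exp (-exp x) * exp x ^ (c - 1)) = exp (c * x - exp x) := by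
  rw [abs_of_pos (exp_pos x), smul_eq_mul, ← exp_mul, ← exp_add, ← exp_add]
  ring_nf

theorem integrable_exp_mul_sub_exp {c : ℝ} (hc : 0 < c) :
    Integrable fun x : ℝ => exp (c * x - exp x) := by
  have h := (integrableOn_image_iff_integrableOn_abs_deriv_smul MeasurableSet.univ
    (fun x _ => (hasDerivAt_exp x).hasDerivWithinAt) exp_injective.injOn
    (fun t => exp (-t) * t ^ (c - 1))).1
  rw [image_univ, range_exp, integrableOn_univ] at h
  simpa only [exp_smul_gammaIntegrand_exp] using h (GammaIntegral_convergent hc)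

theorem integral_exp_mul_sub_exp {c : ℝ} (hc : 0 < c) :
    ∫ x : ℝ, exp (c * x - exp x) = Gamma c := by
  have h := integral_image_eq_integral_abs_deriv_smul MeasurableSet.univ
    (fun x _ => (hasDerivAt_exp x).hasDerivWithinAt) exp_injective.injOn
    (fun t => exp (-t) * t ^ (c - 1))
  rw [image_univ, range_exp, ← Gamma_eq_integral hc, setIntegral_univ] at h
  simpa only [exp_smul_gammaIntegrand_exp] using h.symm

theorem integrable_exp_neg_mul_div_sub_exp_neg_div {a c : ℝ} (ha : a ≠ 0) (hc : 0 < c) :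
    Integrable fun x : ℝ => exp (-(c * x / a) - exp (-(x / a))) := by
  have h := (integrable_comp_div_iff _ (neg_ne_zero.2 ha)).2 (integrable_exp_mul_sub_exp hc)
  simpa only [div_neg, mul_neg, mul_div_assoc] using h

theorem integral_exp_neg_mul_div_sub_exp_neg_div {a c : ℝ} (hc : 0 < c) :
    ∫ x : ℝ, exp (-(c * x / a) - exp (-(x / a))) = |a| * Gamma c := by
  have h := Measure.integral_comp_div (fun x => exp (c * x - exp x)) (-a)
  simpa only [div_neg, mul_neg, mul_div_assoc, abs_neg, integral_exp_mul_sub_exp hc,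
    smul_eq_mul] using h

theorem integrableOn_pow_mul_exp_neg_mul_Ioi (m : ℕ) {r : ℝ} (hr : 0 < r) :
    IntegrableOn (fun x : ℝ => x ^ m * exp (-(r * x))) (Ioi 0) := by
  have h := integrableOn_rpow_mul_exp_neg_mul_rpow (s := m)
    (neg_one_lt_zero.trans_le m.cast_nonneg) one_pos hr
  simpa only [rpow_natCast, rpow_one, neg_mul] using h

theorem integral_pow_mul_exp_neg_mul_Ioi (m : ℕ) {r : ℝ} (hr : 0 < r) :
    ∫ x in Ioi 0, x ^ m * exp (-(r * x)) = m ! / r ^ (m + 1) := by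
  have h := integral_rpow_mul_exp_neg_mul_Ioi (a := m + 1) (by positivity) hr
  rw [add_sub_cancel_right, Gamma_nat_eq_factorial, ← Nat.cast_succ, rpow_natCast] at h
  rw [div_pow, one_pow, one_div_mul_eq_div, Nat.succ_eq_add_one] at h
  rw [← h]
  refine setIntegral_congr_fun measurableSet_Ioi fun x _ => ?_
  rw [rpow_natCast]

theorem neg_le_mul_exp_neg_div {a : ℝ} (ha : 0 < a) (x : ℝ) : -x ≤ a * exp (-(x / a)) := by
  have h := mul_le_mul_of_nonneg_left ((le_add_of_nonneg_right zero_le_one).trans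
    (add_one_le_exp (-(x / a)))) ha.le
  rwa [mul_neg, mul_div_cancel₀ x ha.ne'] at h

theorem pow_le_pow_mul_exp_neg_div {a x : ℝ} {m : ℕ} (hm : Even m) (ha : 0 < a) (hx : x ≤ 0) :
    x ^ m ≤ a ^ m * exp (-(m * x / a)) :=
  calc x ^ m = (-x) ^ m := (hm.neg_pow x).symm
    _ ≤ (a * exp (-(x / a))) ^ m :=
        pow_le_pow_left₀ (neg_nonneg.2 hx) (neg_le_mul_exp_neg_div ha x) m
    _ = a ^ m * exp (-(m * x / a)) := by rw [mul_pow, ← exp_nat_mul]; ring_nf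

theorem integral_pow_mul_exp_neg_mul_div_sub_exp_neg_div_lt {a b : ℝ} (ha : 0 < a) (hb : 0 < b)
    {m : ℕ} (hm : Even m) :
    ∫ x, x ^ m * exp (-(b * x / a) - exp (-(x / a)))
      < m ! * a ^ (m + 1) / b ^ (m + 1) + a ^ (m + 1) * Gamma (m + b) := by
  set f : ℝ → ℝ := fun x => x ^ m * exp (-(b * x / a) - exp (-(x / a)))
  set gNeg : ℝ → ℝ := fun x => a ^ m * exp (-((m + b) * x / a) - exp (-(x / a)))
  set gPos : ℝ → ℝ := fun x => x ^ m * exp (-(b / a * x))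
  have hf_nonneg : ∀ x, 0 ≤ f x := fun x => mul_nonneg (hm.pow_nonneg x) (exp_pos _).le
  have hf_cont : Continuous f := by fun_prop
  have hgNeg_int : Integrable gNeg :=
    (integrable_exp_neg_mul_div_sub_exp_neg_div ha.ne' (by positivity)).const_mul _
  have hgPos_int : IntegrableOn gPos (Ioi 0) :=
    integrableOn_pow_mul_exp_neg_mul_Ioi m (div_pos hb ha)
  have hf_le_gNeg : ∀ x ∈ Iic 0, f x ≤ gNeg x := fun x hx =>
    calc f x ≤ a ^ m * exp (-(m * x / a)) * exp (-(b * x / a) - exp (-(x / a))) :=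
          mul_le_mul_of_nonneg_right (pow_le_pow_mul_exp_neg_div hm ha hx) (exp_pos _).le
      _ = gNeg x := by simp only [gNeg]; rw [mul_assoc, ← exp_add]; congr 2; ring
  have hf_lt_gPos : ∀ x ∈ Ioi 0, f x < gPos x := fun x hx => by
    refine mul_lt_mul_of_pos_left (exp_lt_exp.2 ?_) (pow_pos hx m)
    linarith [exp_pos (-(x / a)), mul_div_right_comm b x a]
  have hf_int_neg : IntegrableOn f (Iic 0) :=
    hgNeg_int.integrableOn.mono' hf_cont.aestronglyMeasurable.restrict
      ((ae_restrict_iff' measurableSet_Iic).2 (.of_forall fun x hx => by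
        rw [Real.norm_of_nonneg (hf_nonneg x)]; exact hf_le_gNeg x hx))
  have hf_int_pos : IntegrableOn f (Ioi 0) :=
    hgPos_int.mono' hf_cont.aestronglyMeasurable.restrict
      ((ae_restrict_iff' measurableSet_Ioi).2 (.of_forall fun x hx => by
        rw [Real.norm_of_nonneg (hf_nonneg x)]; exact (hf_lt_gPos x hx).le))
  calc ∫ x, f x = (∫ x in Iic 0, f x) + ∫ x in Ioi 0, f x :=
        (intervalIntegral.integral_Iic_add_Ioi hf_int_neg hf_int_pos).symm
    _ < (∫ x, gNeg x) + ∫ x in Ioi 0, gPos x := by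
        refine add_lt_add_of_le_of_lt ?_ ?_
        · exact (setIntegral_mono_on hf_int_neg hgNeg_int.integrableOn measurableSet_Iic
            hf_le_gNeg).trans
            (setIntegral_le_integral hgNeg_int (.of_forall fun x => by positivity))
        · exact setIntegral_lt_setIntegral_of_forall_lt measurableSet_Ioi (by simp) hf_int_pos
            hgPos_int hf_lt_gPos
    _ = m ! * a ^ (m + 1) / b ^ (m + 1) + a ^ (m + 1) * Gamma (m + b) := by
        rw [integral_const_mul, integral_exp_neg_mul_div_sub_exp_neg_div (by positivity),
          integral_pow_mul_exp_neg_mul_Ioi m (div_pos hb ha), abs_of_pos ha, div_pow]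
        field_simp
        ring

theorem stmt_14_general (a b : ℝ) (ha : 0 < a) (hb : 0 < b) (n : ℕ) :
    ∫ x : ℝ, x ^ (2*n) * ((1 / (a * Real.Gamma b)) * Real.exp (-(b * x / a) - Real.exp (-(x/a))))
      < (a ^ (2*n) / Real.Gamma b) *
          ((Nat.factorial (2*n) : ℝ) / b ^ (2*n+1) + Real.Gamma (2*n + b)) := by
  have hΓ := Gamma_pos_of_pos hb
  calc ∫ x, x ^ (2 * n) * (1 / (a * Gamma b) * exp (-(b * x / a) - exp (-(x / a))))
        = 1 / (a * Gamma b) * ∫ x, x ^ (2 * n) * exp (-(b * x / a) - exp (-(x / a))) := by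
          rw [← integral_const_mul]
          simp only [mul_left_comm]
    _ < 1 / (a * Gamma b) * ((2 * n)! * a ^ (2 * n + 1) / b ^ (2 * n + 1)
          + a ^ (2 * n + 1) * Gamma ((2 * n : ℕ) + b)) := by
          gcongr
          exact integral_pow_mul_exp_neg_mul_div_sub_exp_neg_div_lt ha hb (even_two_mul n)
    _ = a ^ (2 * n) / Gamma b * ((2 * n)! / b ^ (2 * n + 1) + Gamma (2 * n + b)) := by
          push_cast
          field_simp
          ring

theorem stmt_14 (a b : ℝ) (ha : 0 < a) (hb : 0 < b) (n : ℕ) (hn : 1 ≤ n) :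
    ∫ x : ℝ, x ^ (2*n) * ((1 / (a * Real.Gamma b)) * Real.exp (-(b * x / a) - Real.exp (-(x/a))))
      < (a ^ (2*n) / Real.Gamma b) *
          ((Nat.factorial (2*n) : ℝ) / b ^ (2*n+1) + Real.Gamma (2*n + b)) :=
  stmt_14_general a b ha hb n
end

section
/- For all real a, b > 0, the density g₁(a,b)(x) = (1/(aΓ(b))) exp(−bx/a − e^{−x/a}) on ℝ satisfies Carleman's condition ∑_{n≥1} s_{2n}^{−1/(2n)} = ∞, where s_{2n} are its even moments; hence it is determinate in the Hamburger moment problem. -/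
/-!
The density is at most `C * exp (-(c * |x|))` with `c = min 1 b / a`: for `x ≥ 0` drop the double
exponential, for `x < 0` it dominates by `exp u ≥ 1 + u + u ^ 2 / 2`. Since
`|x| ^ m * exp (-(c / 2 * |x|)) ≤ (2 m / c) ^ m`, the moments satisfy `s_m ≤ (D m) ^ m` for a
constant `D`, so `s_{2n} ^ (-1 / 2n) ≥ 1 / (2 D n)` and the series diverges with the harmonic one.
-/

open MeasureTheory Real Set

lemma integrable_exp_neg_mul_abs {c : ℝ} (hc : 0 < c) :
    Integrable fun x : ℝ => exp (-(c * |x|)) := by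
  have hIoi : IntegrableOn (fun x : ℝ => exp (-(c * |x|))) (Ioi 0) :=
    (exp_neg_integrableOn_Ioi 0 hc).congr_fun
      (fun x hx => by simp [abs_of_pos (mem_Ioi.mp hx)]) measurableSet_Ioi
  have hIic : IntegrableOn (fun x : ℝ => exp (-(c * |x|))) (Iic 0) := by
    have hneg : MeasurableEmbedding fun x : ℝ => -x := (Homeomorph.neg ℝ).measurableEmbedding
    rw [← Measure.map_neg_eq_self (volume : Measure ℝ), hneg.integrableOn_map_iff]
    simpa only [Function.comp_def, abs_neg, neg_preimage, neg_Iic, neg_zero] using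
      (integrableOn_Ici_iff_integrableOn_Ioi).mpr hIoi
  simpa only [← integrableOn_univ, ← Iic_union_Ioi (a := (0 : ℝ))] using hIic.union hIoi

lemma pow_mul_exp_neg_mul_le {l t : ℝ} (hl : 0 < l) (ht : 0 ≤ t) (m : ℕ) :
    t ^ m * exp (-(l * t)) ≤ (m / l) ^ m := by
  have hexp := Real.pow_div_factorial_le_exp (x := l * t) (by positivity) m
  have hfact : (m.factorial : ℝ) ≤ (m : ℝ) ^ m := by exact_mod_cast m.factorial_le_pow
  rw [div_le_iff₀ (by positivity), mul_pow] at hexp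
  rw [exp_neg, ← div_eq_mul_inv, div_le_iff₀ (exp_pos _), div_pow,
    div_mul_eq_mul_div, le_div_iff₀ (by positivity)]
  nlinarith [pow_nonneg ht m, pow_pos hl m, exp_pos (l * t)]

lemma inv_le_rpow_neg_inv_of_le_pow {s y : ℝ} {m : ℕ} (hs : 0 < s) (hy : 0 < y) (hm : m ≠ 0)
    (h : s ≤ y ^ m) : y⁻¹ ≤ s ^ (-(1 / (m : ℝ))) := by
  calc y⁻¹ = (y ^ m) ^ (-(1 / (m : ℝ))) := by
        rw [rpow_neg (by positivity), one_div, pow_rpow_inv_natCast hy.le hm]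
    _ ≤ s ^ (-(1 / (m : ℝ))) := rpow_le_rpow_of_nonpos hs h (by simp)

lemma integral_even_pow_mul_pos {g : ℝ → ℝ} (hg_pos : ∀ x, 0 < g x) {m : ℕ} (hm : Even m)
    (hint : Integrable fun x => x ^ m * g x) : 0 < ∫ x, x ^ m * g x := by
  have hnonneg : ∀ x, 0 ≤ x ^ m * g x := fun x => mul_nonneg (hm.pow_nonneg x) (hg_pos x).le
  rw [integral_pos_iff_support_of_nonneg hnonneg hint]
  have hsupp : Ioi 0 ⊆ Function.support fun x => x ^ m * g x :=
    fun x hx => (mul_pos (pow_pos hx m) (hg_pos x)).ne'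
  exact (measure_mono hsupp).trans_lt' (by simp)

section ExponentialDecay

variable {g : ℝ → ℝ} {A c : ℝ}

lemma abs_pow_mul_le_of_abs_le_exp_neg (hc : 0 < c) (hle : ∀ x, |g x| ≤ A * exp (-(c * |x|)))
    (m : ℕ) (x : ℝ) : |x ^ m * g x| ≤ A * (2 * m / c) ^ m * exp (-(c / 2 * |x|)) := by
  have hA : 0 ≤ A := by simpa using (abs_nonneg _).trans (hle 0)
  have hpow := pow_mul_exp_neg_mul_le (half_pos hc) (abs_nonneg x) m
  rw [div_div_eq_mul_div, mul_comm (m : ℝ) 2] at hpow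
  calc |x ^ m * g x| ≤ |x| ^ m * (A * exp (-(c * |x|))) := by
        rw [abs_mul, abs_pow]; gcongr; exact hle x
    _ = A * (|x| ^ m * exp (-(c / 2 * |x|))) * exp (-(c / 2 * |x|)) := by
        rw [show exp (-(c * |x|)) = exp (-(c / 2 * |x|)) * exp (-(c / 2 * |x|)) by
          rw [← exp_add]; ring_nf]
        ring
    _ ≤ A * (2 * m / c) ^ m * exp (-(c / 2 * |x|)) := by gcongr

lemma integrable_pow_mul_of_abs_le_exp_neg (hg : AEStronglyMeasurable g) (hc : 0 < c)
    (hle : ∀ x, |g x| ≤ A * exp (-(c * |x|))) (m : ℕ) : Integrable fun x => x ^ m * g x :=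
  ((integrable_exp_neg_mul_abs (half_pos hc)).const_mul _).mono'
    ((continuous_pow m).aestronglyMeasurable.mul hg)
    (.of_forall (abs_pow_mul_le_of_abs_le_exp_neg hc hle m))

lemma integral_pow_mul_le_of_abs_le_exp_neg (hg : AEStronglyMeasurable g) (hc : 0 < c)
    (hle : ∀ x, |g x| ≤ A * exp (-(c * |x|))) (m : ℕ) :
    ∫ x, x ^ m * g x ≤ A * (2 * m / c) ^ m * ∫ x, exp (-(c / 2 * |x|)) := by
  rw [← integral_const_mul]
  exact integral_mono (integrable_pow_mul_of_abs_le_exp_neg hg hc hle m)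
    ((integrable_exp_neg_mul_abs (half_pos hc)).const_mul _)
    (fun x => (le_abs_self _).trans (abs_pow_mul_le_of_abs_le_exp_neg hc hle m x))

lemma exists_integral_pow_mul_le_mul_pow (hg : AEStronglyMeasurable g) (hc : 0 < c)
    (hle : ∀ x, |g x| ≤ A * exp (-(c * |x|))) :
    ∃ D > 0, ∀ m : ℕ, m ≠ 0 → ∫ x, x ^ m * g x ≤ (D * m) ^ m := by
  set B := max (A * ∫ x, exp (-(c / 2 * |x|))) 1
  have hB : 1 ≤ B := le_max_right _ _
  refine ⟨B * (2 / c), by positivity, fun m hm => ?_⟩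
  calc ∫ x, x ^ m * g x ≤ A * (2 * m / c) ^ m * ∫ x, exp (-(c / 2 * |x|)) :=
        integral_pow_mul_le_of_abs_le_exp_neg hg hc hle m
    _ = (A * ∫ x, exp (-(c / 2 * |x|))) * (2 * m / c) ^ m := by ring
    _ ≤ B ^ m * (2 * m / c) ^ m := by
        gcongr
        exact (le_max_left _ _).trans (le_self_pow₀ hB hm)
    _ = (B * (2 / c) * m) ^ m := by rw [← mul_pow]; ring

theorem not_summable_moment_rpow_of_le_exp_neg_abs (hg : AEStronglyMeasurable g)
    (hg_pos : ∀ x, 0 < g x) (hc : 0 < c) (hle : ∀ x, g x ≤ A * exp (-(c * |x|))) :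
    ¬ Summable fun n : ℕ =>
      (∫ x, x ^ (2 * (n + 1)) * g x) ^ (-(1 / (2 * ((n : ℝ) + 1)))) := by
  have habs : ∀ x, |g x| ≤ A * exp (-(c * |x|)) := fun x =>
    (abs_of_pos (hg_pos x)).trans_le (hle x)
  obtain ⟨D, hD, hmoment⟩ := exists_integral_pow_mul_le_mul_pow hg hc habs
  have hterm : ∀ n : ℕ, (2 * D)⁻¹ * ((n + 1 : ℕ) : ℝ)⁻¹ ≤
      (∫ x, x ^ (2 * (n + 1)) * g x) ^ (-(1 / (2 * ((n : ℝ) + 1)))) := by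
    intro n
    have hm : 2 * (n + 1) ≠ 0 := by omega
    have hinv := inv_le_rpow_neg_inv_of_le_pow
      (integral_even_pow_mul_pos hg_pos (even_two_mul _)
        (integrable_pow_mul_of_abs_le_exp_neg hg hc habs _))
      (by positivity) hm (hmoment _ hm)
    push_cast at hinv ⊢
    rwa [← mul_inv, show 2 * D * ((n : ℝ) + 1) = D * (2 * ((n : ℝ) + 1)) by ring]
  intro hsum
  have hharmonic : Summable fun n : ℕ => ((n + 1 : ℕ) : ℝ)⁻¹ :=
    (summable_mul_left_iff (by positivity : (2 * D)⁻¹ ≠ 0)).mp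
      (hsum.of_nonneg_of_le (fun n => by positivity) hterm)
  exact not_summable_natCast_inv ((summable_nat_add_iff 1).mp hharmonic)

end ExponentialDecay

lemma neg_mul_sub_exp_neg_le (b u : ℝ) :
    -(b * u) - exp (-u) ≤ (b + 1) ^ 2 / 2 - min 1 b * |u| := by
  rcases le_or_gt 0 u with hu | hu
  · rw [abs_of_nonneg hu]
    nlinarith [exp_pos (-u), min_le_right 1 b, sq_nonneg (b + 1)]
  · rw [abs_of_neg hu]
    nlinarith [quadratic_le_exp_of_nonneg (neg_nonneg.mpr hu.le), min_le_left 1 b,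
      sq_nonneg (u + b)]

theorem stmt_15 (a b : ℝ) (ha : 0 < a) (hb : 0 < b) :
    ¬ Summable (fun n : ℕ =>
      (∫ x : ℝ, x ^ (2*(n+1)) *
          ((1 / (a * Real.Gamma b)) * Real.exp (-(b * x / a) - Real.exp (-(x/a))))) ^
        (-(1 / (2 * ((n:ℝ) + 1))))) := by
  have hΓ := Gamma_pos_of_pos hb
  refine not_summable_moment_rpow_of_le_exp_neg_abs (by fun_prop)
    (fun x => by positivity) (div_pos (lt_min one_pos hb) ha)
    (A := 1 / (a * Gamma b) * exp ((b + 1) ^ 2 / 2)) (fun x => ?_)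
  have hexponent := neg_mul_sub_exp_neg_le b (x / a)
  rw [abs_div, abs_of_pos ha] at hexponent
  rw [mul_assoc, ← exp_add]
  gcongr
  calc -(b * x / a) - exp (-(x / a)) = -(b * (x / a)) - exp (-(x / a)) := by ring
    _ ≤ _ := hexponent
    _ = _ := by ring
end

section
/- For all real a, b > 0, the first moment of the density g₁(a,b)(x) = (1/(aΓ(b))) exp(−bx/a − e^{−x/a}) equals −a·Ψ(b), where Ψ = Γ'/Γ is the digamma function; i.e., ∫_{−∞}^∞ x g₁(a,b)(x) dx = −aΨ(b). -/
/-!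
Substituting `x = -a log t` turns the density into `t ^ (b - 1) e^(-t) / Γ(b)` on `(0, ∞)`
and `x` into `-a log t`, so the first moment is `-a / Γ(b) · ∫₀^∞ t ^ (b - 1) log t e^(-t) dt`.
That integral is `Γ'(b)`, by differentiating Euler's integral under the integral sign.
-/

open MeasureTheory Set

/-- The digamma function Ψ = Γ'/Γ. -/
noncomputable def digamma (x : ℝ) : ℝ := deriv Real.Gamma x / Real.Gamma x

section

open Real

theorem Real.hasDerivAt_Gamma_integral {s : ℝ} (hs : 0 < s) :
    HasDerivAt Gamma (∫ t in Ioi (0 : ℝ), t ^ (s - 1) * (log t * exp (-t))) s := by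
  have hs' : 0 < (s : ℂ).re := by simpa using hs
  have hΓ : HasDerivAt Complex.Gamma
      (∫ t : ℝ in Ioi 0, (t : ℂ) ^ ((s : ℂ) - 1) * (log t * exp (-t))) s := by
    refine (Complex.hasDerivAt_GammaIntegral hs').congr_of_eventuallyEq ?_
    filter_upwards [(isOpen_lt continuous_const Complex.continuous_re).mem_nhds hs'] with z hz
    exact Complex.Gamma_eq_integral hz
  have hcast : (∫ t : ℝ in Ioi 0, (t : ℂ) ^ ((s : ℂ) - 1) * (log t * exp (-t)))
      = ((∫ t in Ioi (0 : ℝ), t ^ (s - 1) * (log t * exp (-t)) : ℝ) : ℂ) := by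
    rw [← integral_complex_ofReal]
    refine setIntegral_congr_fun measurableSet_Ioi fun t ht => ?_
    push_cast [Complex.ofReal_cpow (le_of_lt ht)]
    rfl
  rw [hcast] at hΓ
  simpa [Complex.Gamma_ofReal] using hΓ.real_of_complex

theorem integral_Ioi_inv_smul_comp_log {E : Type*} [NormedAddCommGroup E] [NormedSpace ℝ E]
    (f : ℝ → E) : ∫ t in Ioi (0 : ℝ), t⁻¹ • f (log t) = ∫ x, f x := by
  rw [← range_exp, ← image_univ, integral_image_eq_integral_abs_deriv_smul MeasurableSet.univ
    (fun x _ => (hasDerivAt_exp x).hasDerivWithinAt) exp_injective.injOn, setIntegral_univ]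
  simp [abs_of_pos (exp_pos _), smul_smul, (exp_pos _).ne']

theorem integral_Ioi_inv_smul_comp_mul_log {E : Type*} [NormedAddCommGroup E] [NormedSpace ℝ E]
    (f : ℝ → E) (a : ℝ) :
    ∫ t in Ioi (0 : ℝ), t⁻¹ • f (a * log t) = |a⁻¹| • ∫ x, f x := by
  rw [integral_Ioi_inv_smul_comp_log (fun x => f (a * x)), Measure.integral_comp_mul_left]

end

-- `Real` stays closed here, since `Real.digamma` would make `digamma` ambiguous.
theorem stmt_18 (a b : ℝ) (ha : 0 < a) (hb : 0 < b) :
    ∫ x : ℝ, x * ((1 / (a * Real.Gamma b)) * Real.exp (-(b * x / a) - Real.exp (-(x/a))))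
      = -a * digamma b := by
  set F : ℝ → ℝ :=
    fun x => x * (1 / (a * Real.Gamma b) * Real.exp (-(b * x / a) - Real.exp (-(x / a))))
  have hF : ∀ t ∈ Ioi (0 : ℝ), t⁻¹ • F (-a * Real.log t)
      = -(Real.Gamma b)⁻¹ * (t ^ (b - 1) * (Real.log t * Real.exp (-t))) := by
    intro t (ht : 0 < t)
    have hexp : Real.exp (-(b * (-a * Real.log t) / a) - Real.exp (-(-a * Real.log t / a)))
        = t ^ b * Real.exp (-t) := by
      rw [show -(b * (-a * Real.log t) / a) = Real.log t * b by field_simp,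
        show -(-a * Real.log t / a) = Real.log t by field_simp, Real.exp_log ht, Real.exp_sub,
        ← Real.rpow_def_of_pos ht, Real.exp_neg, div_eq_mul_inv]
    simp only [F, smul_eq_mul, hexp, Real.rpow_sub_one ht.ne']
    field_simp
  have hsubst := integral_Ioi_inv_smul_comp_mul_log F (-a)
  rw [setIntegral_congr_fun measurableSet_Ioi hF, integral_const_mul,
    abs_inv, abs_neg, abs_of_pos ha, smul_eq_mul] at hsubst
  have hΓ := (Real.Gamma_pos_of_pos hb).ne'
  calc ∫ x, F x = a * (a⁻¹ * ∫ x, F x) := by field_simp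
    _ = -a * digamma b := by
      rw [← hsubst, digamma, (Real.hasDerivAt_Gamma_integral hb).deriv]
      field_simp
end
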